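/- arXiv:2603.18493 — 2 statements merged into one kernel-verified Lean document; each statement's English description precedes it below -/
import Mathlib

section
/- For q, r > 0 and any p_0 ≥ 0, the sequence defined by p_{t+1} = r·(p_t + q)/(p_t + q + r) converges to p* = (√(q² + 4qr) − q)/2. -/
theorem kalman_variance_converges (q r : ℝ) (hq : 0 < q) (hr : 0 < r)
    (p : ℕ → ℝ) (hp0 : 0 ≤ p 0)
    (hrec : ∀ t : ℕ, p (t + 1) = r * (p t + q) / (p t + q + r)) :
    Filter.Tendsto p Filter.atTop (nhds ((Real.sqrt (q^2 + 4*q*r) - q) / 2)) := by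
  set s : ℝ := Real.sqrt (q^2 + 4*q*r) with hs
  have hsnn : 0 ≤ q^2 + 4*q*r := by positivity
  have hs2 : s^2 = q^2 + 4*q*r := Real.sq_sqrt hsnn
  have hsq : q ≤ s := by
    nlinarith [Real.sqrt_nonneg (q^2 + 4*q*r), hs2]
  set L : ℝ := (s - q) / 2 with hL
  have hL0 : 0 ≤ L := by rw [hL]; linarith
  have hLfix : L^2 + q*L - q*r = 0 := by
    rw [hL]; nlinarith [hs2]
  have hLr : L ≤ r := by nlinarith
  -- nonnegativity of the sequence
  have hpos : ∀ t, 0 ≤ p t := by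
    intro t
    induction t with
    | zero => exact hp0
    | succ n ih =>
      rw [hrec n]
      have : 0 < p n + q + r := by linarith
      positivity
  set k : ℝ := r / (q + r) with hk
  have hk0 : 0 ≤ k := by positivity
  have hk1 : k < 1 := by rw [hk, div_lt_one (by linarith)]; linarith
  have key : ∀ t, |p (t + 1) - L| ≤ k * |p t - L| := by
    intro t
    have ha := hpos t
    have hd : 0 < p t + q + r := by linarith
    have heq : p (t + 1) - L = (p t - L) * (r - L) / (p t + q + r) := by
      rw [hrec t]
      field_simp
      nlinarith [hLfix]
    rw [heq, abs_div, abs_mul, abs_of_pos hd, abs_of_nonneg (by linarith : (0:ℝ) ≤ r - L),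
      show k * |p t - L| = |p t - L| * r / (q + r) by rw [hk]; ring]
    exact div_le_div₀ (by positivity)
      (mul_le_mul_of_nonneg_left (by linarith) (abs_nonneg _)) (by linarith) (by linarith)
  have hbound : ∀ t, |p t - L| ≤ k ^ t * |p 0 - L| := by
    intro t
    induction t with
    | zero => simp
    | succ n ih =>
      calc |p (n + 1) - L| ≤ k * |p n - L| := key n
        _ ≤ k * (k ^ n * |p 0 - L|) := by
            exact mul_le_mul_of_nonneg_left ih hk0
        _ = k ^ (n + 1) * |p 0 - L| := by ring
  have hgeo : Filter.Tendsto (fun t => k ^ t * |p 0 - L|) Filter.atTop (nhds 0) := by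
    have := (tendsto_pow_atTop_nhds_zero_of_lt_one hk0 hk1).mul_const (|p 0 - L|)
    simpa using this
  have hdist : Filter.Tendsto (fun t => |p t - L|) Filter.atTop (nhds 0) :=
    squeeze_zero (fun t => abs_nonneg _) hbound hgeo
  rw [tendsto_iff_dist_tendsto_zero]
  simpa [Real.dist_eq] using hdist
end

section
/- For the scalar Kalman variance recursion p_{t+1} = f(p_t) with f(p) = r(p+q)/(p+q+r), q, r > 0, the convergence to the fixed point p* is geometric: |p_t − p*| ≤ (r²/(q+r)²)^t · |p_0 − p*| for all p_0 ≥ 0 and t ≥ 0. -/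
/-!
The error `e = p - p*` of the recursion satisfies `e' = r² e / ((p + q + r)(p* + q + r))`,
which follows from the fixed-point equation `p*² + q p* = q r` by clearing denominators. Since both
`p` and `p*` are nonnegative, the denominator is at least `(q + r)²`, so each step contracts the
distance to `p*` by the factor `r² / (q + r)²`.
-/

open Set

theorem dist_le_pow_mul_of_contracts_toward {α : Type*} [PseudoMetricSpace α] {f : α → α}
    {s : Set α} (hfs : MapsTo f s s) {x : α} {c : ℝ} (hc : 0 ≤ c)
    (hf : ∀ a ∈ s, dist (f a) x ≤ c * dist a x) {u : ℕ → α} (hu0 : u 0 ∈ s)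
    (hu : ∀ n, u (n + 1) = f (u n)) (n : ℕ) : u n ∈ s ∧ dist (u n) x ≤ c ^ n * dist (u 0) x := by
  induction n with
  | zero => simpa using hu0
  | succ n ih =>
    obtain ⟨hun, hdist⟩ := ih
    rw [hu n]
    refine ⟨hfs hun, ?_⟩
    calc dist (f (u n)) x ≤ c * dist (u n) x := hf _ hun
      _ ≤ c * (c ^ n * dist (u 0) x) := by gcongr
      _ = c ^ (n + 1) * dist (u 0) x := by ring

namespace Kalman

variable {q r : ℝ}

/-- The prediction `m = p + q` followed by the measurement update `r m / (m + r)`. -/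
noncomputable def step (q r p : ℝ) : ℝ := r * (p + q) / (p + q + r)

noncomputable def fixedPoint (q r : ℝ) : ℝ := (Real.sqrt (q ^ 2 + 4 * q * r) - q) / 2

theorem fixedPoint_nonneg (hq : 0 ≤ q) (hr : 0 ≤ r) : 0 ≤ fixedPoint q r := by
  have : q ≤ Real.sqrt (q ^ 2 + 4 * q * r) :=
    Real.le_sqrt_of_sq_le (by nlinarith [mul_nonneg hq hr])
  unfold fixedPoint
  linarith

theorem fixedPoint_sq_add_mul (hq : 0 ≤ q) (hr : 0 ≤ r) :
    fixedPoint q r ^ 2 + q * fixedPoint q r = q * r := by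
  have hs := Real.sq_sqrt (by positivity : 0 ≤ q ^ 2 + 4 * q * r)
  unfold fixedPoint
  linear_combination hs / 4

theorem step_nonneg (hq : 0 ≤ q) (hr : 0 ≤ r) {p : ℝ} (hp : 0 ≤ p) : 0 ≤ step q r p := by
  unfold step
  positivity

theorem step_sub_fixedPoint (hq : 0 ≤ q) (hr : 0 < r) {p : ℝ} (hp : 0 ≤ p) :
    step q r p - fixedPoint q r
      = r ^ 2 * (p - fixedPoint q r) / ((p + q + r) * (fixedPoint q r + q + r)) := by
  have hP := fixedPoint_nonneg hq hr.le
  have hfix := fixedPoint_sq_add_mul hq hr.le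
  unfold step
  field_simp
  linear_combination (-(p + q + r)) * hfix

theorem abs_step_sub_fixedPoint_le (hq : 0 ≤ q) (hr : 0 < r) {p : ℝ} (hp : 0 ≤ p) :
    |step q r p - fixedPoint q r| ≤ r ^ 2 / (q + r) ^ 2 * |p - fixedPoint q r| := by
  have hP := fixedPoint_nonneg hq hr.le
  have hD : 0 < (p + q + r) * (fixedPoint q r + q + r) := by positivity
  rw [step_sub_fixedPoint hq hr hp, abs_div, abs_mul, abs_of_nonneg (sq_nonneg r),
    abs_of_pos hD, mul_div_right_comm]
  gcongr
  nlinarith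

end Kalman

open Kalman in
theorem kalman_variance_geometric_convergence (q r : ℝ) (hq : 0 < q) (hr : 0 < r)
    (p : ℕ → ℝ) (hp0 : 0 ≤ p 0)
    (hrec : ∀ t : ℕ, p (t + 1) = r * (p t + q) / (p t + q + r)) :
    ∀ t : ℕ, |p t - (Real.sqrt (q^2 + 4*q*r) - q) / 2|
      ≤ (r^2 / (q + r)^2)^t * |p 0 - (Real.sqrt (q^2 + 4*q*r) - q) / 2| := fun t =>
  (dist_le_pow_mul_of_contracts_toward (s := Ici 0) (x := fixedPoint q r)
    (fun _ ha => step_nonneg hq.le hr.le ha) (by positivity)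
    (fun _ ha => abs_step_sub_fixedPoint_le hq.le hr ha) hp0 hrec t).2
end
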